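/- arXiv:1602.07916 — 8 statements merged into one kernel-verified Lean document; each statement's English description precedes it below -/
import Mathlib

section
/- Let p be a prime, let M be a free ℤ_p-module of rank d, let 1 ≤ i ≤ d, and let n ≥ 0 be an integer. If N, N₀ ∈ Gr(i, M) satisfy N ⊆ N₀ + pⁿM, then N + pⁿM = N₀ + pⁿM. -/
/-!
Since `M ⧸ N` and `M ⧸ N₀` are both free of rank `i`, they are isomorphic, so
`M ⧸ (N + pⁿM) ≅ (M ⧸ N) ⧸ pⁿ(M ⧸ N)` and `M ⧸ (N₀ + pⁿM)` are isomorphic finite modules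
(both `≅ (ℤ/pⁿ)^i`). The hypothesis gives `N + pⁿM ⊆ N₀ + pⁿM`, and an inclusion of
submodules whose quotients have the same finite cardinality is an equality.
-/

open Submodule

section

variable {R M : Type*} [CommRing R] [AddCommGroup M] [Module R M]

theorem Submodule.eq_of_le_of_card_quotient_eq {A B : Submodule R M} [Finite (M ⧸ A)]
    (hAB : A ≤ B) (hcard : Nat.card (M ⧸ A) = Nat.card (M ⧸ B)) : A = B := by
  have : A.toAddSubgroup.FiniteIndex :=
    @AddSubgroup.finiteIndex_of_finite_quotient _ _ _ ‹Finite (M ⧸ A)›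
  refine hAB.eq_of_not_lt fun hlt => ?_
  have := AddSubgroup.index_strictAnti (toAddSubgroup_strictMono hlt)
  simp only [AddSubgroup.index_eq_card] at this
  exact this.ne hcard.symm

noncomputable def Submodule.quotientSupIdealSMulTopEquiv (N : Submodule R M) (I : Ideal R) :
    (M ⧸ N ⊔ I • (⊤ : Submodule R M)) ≃ₗ[R] (M ⧸ N) ⧸ I • (⊤ : Submodule R (M ⧸ N)) :=
  (quotientQuotientEquivQuotientSup N (I • ⊤)).symm ≪≫ₗ
    quotEquivOfEq _ _ (by rw [map_smul'', Submodule.map_top, range_mkQ])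

noncomputable def LinearEquiv.quotientIdealSMulTop {M' : Type*} [AddCommGroup M'] [Module R M']
    (e : M ≃ₗ[R] M') (I : Ideal R) :
    (M ⧸ I • (⊤ : Submodule R M)) ≃ₗ[R] M' ⧸ I • (⊤ : Submodule R M') :=
  Quotient.equiv _ _ e (by rw [map_smul'', Submodule.map_top, LinearEquiv.range])

theorem Submodule.finite_quotient_sup_ideal_smul_top (N : Submodule R M) (I : Ideal R)
    [Finite (R ⧸ I)] [Module.Finite R (M ⧸ N)] :
    Finite (M ⧸ N ⊔ I • (⊤ : Submodule R M)) :=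
  have := finite_quotient_smul I (Module.Finite.fg_top (R := R) (M := M ⧸ N))
  .of_equiv _ (quotientSupIdealSMulTopEquiv N I).symm.toEquiv

theorem Submodule.sup_ideal_smul_top_eq_of_le_of_quotientEquiv (I : Ideal R) [Finite (R ⧸ I)]
    {N N₀ : Submodule R M} [Module.Finite R (M ⧸ N)] (e : (M ⧸ N) ≃ₗ[R] M ⧸ N₀)
    (hle : N ≤ N₀ ⊔ I • ⊤) : N ⊔ I • ⊤ = N₀ ⊔ I • (⊤ : Submodule R M) := by
  have := finite_quotient_sup_ideal_smul_top N I
  refine eq_of_le_of_card_quotient_eq (sup_le hle le_sup_right) ?_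
  exact Nat.card_congr ((quotientSupIdealSMulTopEquiv N I ≪≫ₗ e.quotientIdealSMulTop I ≪≫ₗ
    (quotientSupIdealSMulTopEquiv N₀ I).symm).toEquiv)

end

theorem PadicInt.finite_quotient_span_p_pow (p : ℕ) [Fact p.Prime] (n : ℕ) :
    Finite (ℤ_[p] ⧸ Ideal.span {(p : ℤ_[p]) ^ n}) := by
  have : NeZero (p ^ n) := ⟨pow_ne_zero n (Fact.out : p.Prime).ne_zero⟩
  rw [← ker_toZModPow]
  exact .of_equiv _ (RingHom.quotientKerEquivOfSurjective (ZMod.ringHom_surjective _)).symm.toEquiv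

theorem grassmannian_neighborhood_sup_general
    (p : ℕ) [Fact p.Prime] (i : ℕ) (hi : 1 ≤ i) (n : ℕ)
    (M : Type*) [AddCommGroup M] [Module (PadicInt p) M]
    (N N₀ : Submodule (PadicInt p) M)
    (hNfree : Module.Free (PadicInt p) (M ⧸ N))
    (hNrank : Module.finrank (PadicInt p) (M ⧸ N) = i)
    (hN₀free : Module.Free (PadicInt p) (M ⧸ N₀))
    (hN₀rank : Module.finrank (PadicInt p) (M ⧸ N₀) = i)
    (hsub : N ≤ N₀ ⊔ (Ideal.span {(p : PadicInt p) ^ n} • (⊤ : Submodule (PadicInt p) M))) :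
    N ⊔ (Ideal.span {(p : PadicInt p) ^ n} • (⊤ : Submodule (PadicInt p) M)) =
      N₀ ⊔ (Ideal.span {(p : PadicInt p) ^ n} • (⊤ : Submodule (PadicInt p) M)) := by
  have := PadicInt.finite_quotient_span_p_pow p n
  have : Module.Finite ℤ_[p] (M ⧸ N) := Module.finite_of_finrank_pos (hNrank ▸ hi)
  have : Module.Finite ℤ_[p] (M ⧸ N₀) := Module.finite_of_finrank_pos (hN₀rank ▸ hi)
  exact sup_ideal_smul_top_eq_of_le_of_quotientEquiv _
    (LinearEquiv.ofFinrankEq _ _ (hNrank.trans hN₀rank.symm)) hsub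

/-- Let `p` be a prime, `M` a free `ℤ_p`-module of rank `d`, `1 ≤ i ≤ d`,
and `n ≥ 0`. If `N, N₀ ∈ Gr(i, M)` (i.e. `M/N` and `M/N₀` are free of rank `i`) satisfy
`N ⊆ N₀ + pⁿM`, then `N + pⁿM = N₀ + pⁿM`. Here `pⁿM` is the submodule
`Ideal.span {pⁿ} • ⊤`. -/
theorem grassmannian_neighborhood_sup
    (p : ℕ) [Fact p.Prime] (d i : ℕ) (hi : 1 ≤ i) (hid : i ≤ d) (n : ℕ)
    (M : Type*) [AddCommGroup M] [Module (PadicInt p) M]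
    (hfree : Module.Free (PadicInt p) M)
    (hrank : Module.finrank (PadicInt p) M = d)
    (N N₀ : Submodule (PadicInt p) M)
    (hNfree : Module.Free (PadicInt p) (M ⧸ N))
    (hNrank : Module.finrank (PadicInt p) (M ⧸ N) = i)
    (hN₀free : Module.Free (PadicInt p) (M ⧸ N₀))
    (hN₀rank : Module.finrank (PadicInt p) (M ⧸ N₀) = i)
    (hsub : N ≤ N₀ ⊔ (Ideal.span {(p : PadicInt p) ^ n} • (⊤ : Submodule (PadicInt p) M))) :
    N ⊔ (Ideal.span {(p : PadicInt p) ^ n} • (⊤ : Submodule (PadicInt p) M)) =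
      N₀ ⊔ (Ideal.span {(p : PadicInt p) ^ n} • (⊤ : Submodule (PadicInt p) M)) :=
  grassmannian_neighborhood_sup_general p i hi n M N N₀ hNfree hNrank hN₀free hN₀rank hsub
end

section
/- Let p be a prime, let M be a free ℤ_p-module of rank d, let 1 ≤ i ≤ d, and let n ≥ 1 be an integer. For N₀, N ∈ Gr(i, M), the inclusion N ⊆ N₀ + pⁿM holds if and only if there exists a ℤ_p-module automorphism g of M with (g − id)(M) ⊆ pⁿM and g(N₀) = N. (Equivalently: the orbit of N₀ under the subgroup 1 + pⁿ·End(M) of Aut(M) equals the set {N ∈ Gr(i, M) : N ⊆ N₀ + pⁿM}.) -/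
/-!
Write `P = pⁿM`. If `N ⊆ N₀ + P`, then `M/(N + P)` and `M/(N₀ + P)` are both free of rank `i`
over `ℤ/pⁿ`, so the surjection between them is injective and `N₀ ⊆ N + P`. Splitting
`M = N₀ ⊕ C` and lifting the projection onto `N₀` through `N × P → N + P` gives an endomorphism
`g ≡ id mod P` with `g(N₀) ⊆ N`; it is invertible by Nakayama since `p ∈ rad ℤ_p`, and
`g(N₀) = N` because again both quotients are free of rank `i`.
-/

open Submodule

namespace Submodule

variable {R M : Type*} [CommRing R] [AddCommGroup M] [Module R M]

lemma map_smul_top_of_surjective {M' : Type*} [AddCommGroup M'] [Module R M'] (I : Ideal R)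
    {f : M →ₗ[R] M'} (hf : Function.Surjective f) :
    (I • ⊤ : Submodule R M).map f = I • ⊤ := by
  rw [map_smul'', map_top, LinearMap.range_eq_top.mpr hf]

noncomputable def quotientSupSmulTopEquiv (I : Ideal R) {S T : Submodule R M}
    (e : (M ⧸ S) ≃ₗ[R] M ⧸ T) : (M ⧸ S ⊔ I • ⊤) ≃ₗ[R] M ⧸ T ⊔ I • ⊤ :=
  (quotientQuotientEquivQuotientSup S (I • ⊤)).symm ≪≫ₗ
    Quotient.equiv _ _ e (by
      rw [map_smul_top_of_surjective I (mkQ_surjective S),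
        map_smul_top_of_surjective I e.surjective,
        map_smul_top_of_surjective I (mkQ_surjective T)]) ≪≫ₗ
    quotientQuotientEquivQuotientSup T (I • ⊤)

lemma eq_of_le_of_quotient_equiv {A B : Submodule R M} (hAB : A ≤ B) [Module.Finite R (M ⧸ A)]
    (e : (M ⧸ B) ≃ₗ[R] M ⧸ A) : A = B := by
  have hinj : Function.Injective (factor hAB) := by
    have hsurj : Function.Surjective (e.toLinearMap ∘ₗ factor hAB) :=
      e.surjective.comp (factor_surjective hAB)
    have := OrzechProperty.injective_of_surjective_endomorphism _ hsurj
    rw [LinearMap.coe_comp] at this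
    exact this.of_comp
  refine le_antisymm hAB fun x hx => ?_
  have hx0 : factor hAB (mkQ A x) = factor hAB 0 := by
    rw [factor_mk, map_zero, mkQ_apply, Quotient.mk_eq_zero]
    exact hx
  simpa [Quotient.mk_eq_zero] using hinj hx0

lemma sup_smul_top_eq_of_le_of_quotient_equiv [Module.Finite R M] (I : Ideal R)
    {S T : Submodule R M} (hle : S ≤ T ⊔ I • ⊤) (e : (M ⧸ S) ≃ₗ[R] M ⧸ T) :
    S ⊔ I • ⊤ = T ⊔ I • ⊤ :=
  eq_of_le_of_quotient_equiv (sup_le hle le_sup_right) (quotientSupSmulTopEquiv I e.symm)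

lemma map_le_sup_of_sub_mem (N P : Submodule R M) {g : M →ₗ[R] M} (hg : ∀ x, g x - x ∈ P) :
    N.map g ≤ N ⊔ P := by
  rintro _ ⟨y, hy, rfl⟩
  rw [← add_sub_cancel y (g y)]
  exact add_mem (mem_sup_left hy) (mem_sup_right (hg y))

end Submodule

namespace LinearMap

variable {R M : Type*} [CommRing R] [AddCommGroup M] [Module R M]

lemma bijective_of_sub_mem_smul_top [Module.Finite R M] {I : Ideal R}
    (hI : I ≤ Ideal.jacobson ⊥) {f : M →ₗ[R] M} (hf : ∀ x, f x - x ∈ I • (⊤ : Submodule R M)) :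
    Function.Bijective f := by
  refine OrzechProperty.bijective_of_surjective_endomorphism f (range_eq_top.mp ?_)
  refine top_le_iff.mp (le_of_le_smul_of_le_jacobson_bot Module.Finite.fg_top hI fun x _ => ?_)
  rw [← sub_sub_cancel (f x) x]
  exact sub_mem (mem_sup_left (mem_range_self f x)) (mem_sup_right (hf x))

lemma exists_sub_mem_and_map_le [Module.Projective R M] {N₀ : Submodule R M}
    [Module.Projective R (M ⧸ N₀)] {N P : Submodule R M} (h : N₀ ≤ N ⊔ P) :
    ∃ f : M →ₗ[R] M, (∀ x, f x - x ∈ P) ∧ N₀.map f ≤ N := by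
  obtain ⟨s, hs⟩ := Module.projective_lifting_property N₀.mkQ id (mkQ_surjective N₀)
  set r : M →ₗ[R] M := id - s ∘ₗ N₀.mkQ
  have hr_mem : ∀ x, r x ∈ N₀ := fun x => by
    rw [← Quotient.mk_eq_zero, ← mkQ_apply]
    simpa [r, sub_eq_zero] using (LinearMap.congr_fun hs (N₀.mkQ x)).symm
  have hr_fix : ∀ a ∈ N₀, r a = a := fun a ha => by
    simp [r, (Quotient.mk_eq_zero N₀).mpr ha]
  set σ : N × P →ₗ[R] M := N.subtype.coprod P.subtype
  have hσ : ∀ x, r x ∈ range σ := fun x => sup_eq_range N P ▸ h (hr_mem x)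
  obtain ⟨l, hl⟩ := Module.projective_lifting_property σ.rangeRestrict (r.codRestrict _ hσ)
    σ.surjective_rangeRestrict
  have hsplit : ∀ x, ((l x).1 : M) + (l x).2 = r x := fun x =>
    congrArg Subtype.val (LinearMap.congr_fun hl x)
  refine ⟨id - P.subtype ∘ₗ snd R N P ∘ₗ l, fun x => ?_, ?_⟩
  · simp
  · rintro _ ⟨a, ha, rfl⟩
    have : a - (l a).2 = (l a).1 := (eq_sub_of_add_eq ((hsplit a).trans (hr_fix a ha))).symm
    simp [this]

end LinearMap

lemma PadicInt.span_p_pow_le_jacobson {p : ℕ} [Fact p.Prime] {n : ℕ} (hn : n ≠ 0) :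
    Ideal.span {(p : ℤ_[p]) ^ n} ≤ Ideal.jacobson ⊥ := by
  rw [Ideal.span_le, Set.singleton_subset_iff]
  refine IsLocalRing.maximalIdeal_le_jacobson ⊥ ?_
  rw [maximalIdeal_eq_span_p, Ideal.mem_span_singleton]
  exact dvd_pow_self _ hn

/-- Let `p` be a prime, `M` a free `ℤ_p`-module of rank `d`, `1 ≤ i ≤ d`,
`n ≥ 1`. For `N₀, N ∈ Gr(i, M)`, one has `N ⊆ N₀ + pⁿM` if and only if there is a
`ℤ_p`-module automorphism `g` of `M` with `(g - id)(M) ⊆ pⁿM` and `g(N₀) = N`.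
Equivalently: the orbit of `N₀` under `1 + pⁿ·End(M)` is `{N ∈ Gr(i,M) : N ⊆ N₀ + pⁿM}`. -/
theorem grassmannian_orbit_of_congruence_subgroup
    (p : ℕ) [Fact p.Prime] (d i : ℕ) (hi : 1 ≤ i) (hid : i ≤ d) (n : ℕ) (hn : 1 ≤ n)
    (M : Type*) [AddCommGroup M] [Module (PadicInt p) M]
    (hfree : Module.Free (PadicInt p) M)
    (hrank : Module.finrank (PadicInt p) M = d)
    (N N₀ : Submodule (PadicInt p) M)
    (hNfree : Module.Free (PadicInt p) (M ⧸ N))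
    (hNrank : Module.finrank (PadicInt p) (M ⧸ N) = i)
    (hN₀free : Module.Free (PadicInt p) (M ⧸ N₀))
    (hN₀rank : Module.finrank (PadicInt p) (M ⧸ N₀) = i) :
    N ≤ N₀ ⊔ (Ideal.span {(p : PadicInt p) ^ n} • (⊤ : Submodule (PadicInt p) M)) ↔
      ∃ g : M ≃ₗ[PadicInt p] M,
        (∀ x : M, g x - x ∈
          (Ideal.span {(p : PadicInt p) ^ n} • (⊤ : Submodule (PadicInt p) M))) ∧
        N₀.map (g : M →ₗ[PadicInt p] M) = N := by
  have : Module.Finite ℤ_[p] M := Module.finite_of_finrank_pos (by omega)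
  let e : (M ⧸ N) ≃ₗ[ℤ_[p]] M ⧸ N₀ := LinearEquiv.ofFinrankEq _ _ (hNrank.trans hN₀rank.symm)
  constructor
  · intro hle
    have hN₀le := (sup_smul_top_eq_of_le_of_quotient_equiv _ hle e).ge.trans' le_sup_left
    obtain ⟨f, hfP, hfN⟩ := LinearMap.exists_sub_mem_and_map_le hN₀le
    let g := LinearEquiv.ofBijective f
      (LinearMap.bijective_of_sub_mem_smul_top (PadicInt.span_p_pow_le_jacobson (by omega)) hfP)
    exact ⟨g, hfP, eq_of_le_of_quotient_equiv hfN (e ≪≫ₗ Quotient.equiv N₀ _ g rfl)⟩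
  · rintro ⟨g, hg, rfl⟩
    exact map_le_sup_of_sub_mem N₀ _ hg
end

section
/- Let p be a prime and let d, i be integers with 1 ≤ i < d. In the ring M_d(ℤ_p) of d×d matrices over ℤ_p, put B' = {1_d + pC : C ∈ M_d(ℤ_p), C_{jk} = 0 whenever j > d−i and k ≤ d−i} and H' = {1_d + pA : A ∈ M_d(ℤ_p), A_{jk} = 0 whenever j ≤ d−i or k > d−i}. Then H'·B' = 1_d + p·M_d(ℤ_p); that is, every matrix g ∈ M_d(ℤ_p) congruent to the identity modulo p can be written as g = h'b' with h' ∈ H' and b' ∈ B', and conversely every such product is congruent to the identity modulo p. -/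
open PadicInt in
lemma isUnit_det_one_add_p_smul (p : ℕ) [Fact p.Prime] {d : ℕ}
    (X : Matrix (Fin d) (Fin d) (PadicInt p)) :
    IsUnit ((1 + (p : PadicInt p) • X).det) := by
  by_contra h
  have hmem : (1 + (p : PadicInt p) • X).det ∈ IsLocalRing.maximalIdeal (PadicInt p) :=
    (IsLocalRing.mem_maximalIdeal _).mpr h
  rw [PadicInt.maximalIdeal_eq_span_p, Ideal.mem_span_singleton] at hmem
  obtain ⟨c, hc⟩ := hmem
  have hmap : ((1 + (p : PadicInt p) • X).map (PadicInt.toZMod (p := p))) = 1 := by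
    ext j k
    simp [Matrix.map_apply, Matrix.add_apply, Matrix.smul_apply, Matrix.one_apply,
      smul_eq_mul, map_add, map_mul]
  have h1 : (PadicInt.toZMod (p := p)) ((1 + (p : PadicInt p) • X).det) = 1 := by
    rw [RingHom.map_det, RingHom.mapMatrix_apply, hmap, Matrix.det_one]
  rw [hc, map_mul] at h1
  simp at h1

/-- Let `p` be prime and `1 ≤ i < d`. In `M_d(ℤ_p)` put
`B' = {1 + pC : C_{jk} = 0 whenever j > d−i and k ≤ d−i}` and
`H' = {1 + pA : A_{jk} = 0 whenever j ≤ d−i or k > d−i}`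
(indices `1`-based in the informal statement; here `Fin d` is `0`-based, so
"`j > d−i`" reads `d - i ≤ (j : ℕ)` and "`k ≤ d−i`" reads `(k : ℕ) < d - i`).
Then `H'·B' = 1 + p·M_d(ℤ_p)`: a matrix `g` is a product `h'·b'` with `h' ∈ H'`,
`b' ∈ B'` if and only if `g ≡ 1 (mod p)`. -/
theorem unipotent_block_decomposition_mod_p
    (p : ℕ) [Fact p.Prime] (d i : ℕ) (hi : 1 ≤ i) (hid : i < d)
    (g : Matrix (Fin d) (Fin d) (PadicInt p)) :
    (∃ A B : Matrix (Fin d) (Fin d) (PadicInt p),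
        (∀ j k : Fin d, ((j : ℕ) < d - i ∨ d - i ≤ (k : ℕ)) → A j k = 0) ∧
        (∀ j k : Fin d, d - i ≤ (j : ℕ) → (k : ℕ) < d - i → B j k = 0) ∧
        g = (1 + (p : PadicInt p) • A) * (1 + (p : PadicInt p) • B)) ↔
      ∃ C : Matrix (Fin d) (Fin d) (PadicInt p), g = 1 + (p : PadicInt p) • C := by
  constructor
  · rintro ⟨A, B, _, _, hg⟩
    refine ⟨A + B + (p : PadicInt p) • (A * B), ?_⟩
    rw [hg]
    simp only [mul_add, add_mul, one_mul, mul_one, smul_add, smul_smul,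
      Matrix.smul_mul, Matrix.mul_smul]
    abel
  · rintro ⟨C, hg⟩
    -- block-diagonal "top-left" part of g
    set C' : Matrix (Fin d) (Fin d) (PadicInt p) :=
      Matrix.of fun j k => if (j : ℕ) < d - i ∧ (k : ℕ) < d - i then C j k else 0 with hC'
    set P : Matrix (Fin d) (Fin d) (PadicInt p) := 1 + (p : PadicInt p) • C' with hP
    have hdet : IsUnit P.det := isUnit_det_one_add_p_smul p C'
    set A : Matrix (Fin d) (Fin d) (PadicInt p) :=
      Matrix.of fun j k => if d - i ≤ (j : ℕ) ∧ (k : ℕ) < d - i then (C * P⁻¹) j k else 0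
      with hA
    set B : Matrix (Fin d) (Fin d) (PadicInt p) := C - A * g with hB
    refine ⟨A, B, ?_, ?_, ?_⟩
    · intro j k hjk
      rw [hA, Matrix.of_apply, if_neg]
      rintro ⟨h1, h2⟩
      rcases hjk with h | h
      · omega
      · omega
    · intro j k hj hk
      have key : (A * g) j k = ((C * P⁻¹) * P) j k := by
        simp only [Matrix.mul_apply]
        refine Finset.sum_congr rfl fun l _ => ?_
        by_cases hl : (l : ℕ) < d - i
        · rw [hA, Matrix.of_apply, if_pos (show d - i ≤ (j:ℕ) ∧ (l:ℕ) < d - i from ⟨hj, hl⟩)]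
          have hglk : g l k = P l k := by
            rw [hg, hP]
            simp only [Matrix.add_apply, Matrix.smul_apply, hC', Matrix.of_apply]
            rw [if_pos (show (l:ℕ) < d - i ∧ (k:ℕ) < d - i from ⟨hl, hk⟩)]
          rw [hglk, Matrix.mul_apply]
        · have hPlk : P l k = 0 := by
            have hne : l ≠ k := fun e => hl (e ▸ hk)
            rw [hP]
            simp only [Matrix.add_apply, Matrix.smul_apply, hC', Matrix.of_apply,
              Matrix.one_apply_ne hne]
            rw [if_neg (show ¬((l:ℕ) < d - i ∧ (k:ℕ) < d - i) by tauto)]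
            simp
          rw [hA, Matrix.of_apply, if_neg (by tauto), hPlk, zero_mul, mul_zero]
      rw [hB, Matrix.sub_apply, key, Matrix.nonsing_inv_mul_cancel_right _ _ hdet, sub_self]
    · have hAA : A * A = 0 := by
        ext j k
        simp only [Matrix.mul_apply, Matrix.zero_apply]
        refine Finset.sum_eq_zero fun l _ => ?_
        simp only [hA, Matrix.of_apply]
        by_cases hl : (l : ℕ) < d - i
        · rw [if_neg (show ¬(d - i ≤ (l:ℕ) ∧ (k:ℕ) < d - i) by omega), mul_zero]
        · rw [if_neg (show ¬(d - i ≤ (j:ℕ) ∧ (l:ℕ) < d - i) by omega), zero_mul]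
      have hBeq : (1 : Matrix (Fin d) (Fin d) (PadicInt p)) + (p : PadicInt p) • B
          = (1 - (p : PadicInt p) • A) * g := by
        rw [hB, smul_sub, sub_mul, one_mul, Matrix.smul_mul, hg]
        abel
      rw [hBeq, ← mul_assoc]
      have : (1 + (p : PadicInt p) • A) * (1 - (p : PadicInt p) • A)
          = 1 := by
        rw [mul_sub, mul_one, Matrix.mul_smul, add_mul, one_mul, Matrix.smul_mul,
          hAA, smul_zero, add_zero]
        abel
      rw [this, one_mul]
end

section
/- Let p be a prime and let d, i be integers with 1 ≤ i < d. In GL_d(ℤ_p) put B = {g ∈ GL_d(ℤ_p) : g_{jk} = 0 whenever j > d−i and k ≤ d−i} (block upper-triangular matrices) and H = {g ∈ GL_d(ℤ_p) : g_{jk} = δ_{jk} whenever j ≤ d−i or k > d−i} (block lower-unipotent matrices, δ being the Kronecker delta). Then the multiplication map H × B → GL_d(ℤ_p), (h, b) ↦ hb, is injective, and its image HB is an open subset of GL_d(ℤ_p) in the p-adic topology. -/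
namespace HBaux
open Matrix

variable {R : Type*} [CommRing R] {r i d : ℕ}

def σe (hri : r + i = d) : (Fin r ⊕ Fin i) ≃ Fin d := finSumFinEquiv.trans (finCongr hri)

lemma σe_inl (hri : r + i = d) (j : Fin r) : (σe hri (Sum.inl j) : ℕ) = j := by
  simp [σe]

lemma σe_inr (hri : r + i = d) (j : Fin i) : (σe hri (Sum.inr j) : ℕ) = r + j := by
  simp [σe]

noncomputable def φe (hri : r + i = d) (R : Type*) [CommRing R] :
    Matrix (Fin d) (Fin d) R ≃ₐ[R] Matrix (Fin r ⊕ Fin i) (Fin r ⊕ Fin i) R :=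
  reindexAlgEquiv R R (σe hri).symm

lemma φe_apply (hri : r + i = d) (M : Matrix (Fin d) (Fin d) R) (a b : Fin r ⊕ Fin i) :
    φe hri R M a b = M (σe hri a) (σe hri b) := by
  simp [φe, reindexAlgEquiv_apply, reindex_apply, submatrix_apply]

lemma apply_φe (hri : r + i = d) (M : Matrix (Fin d) (Fin d) R) (a b : Fin d) :
    M a b = φe hri R M ((σe hri).symm a) ((σe hri).symm b) := by
  simp [φe_apply]

lemma σe_symm_lt (hri : r + i = d) {a : Fin d} (ha : (a : ℕ) < r) :
    (σe hri).symm a = Sum.inl ⟨a, ha⟩ := by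
  rw [Equiv.symm_apply_eq]
  apply Fin.ext
  simp [σe_inl]

lemma σe_symm_ge (hri : r + i = d) {a : Fin d} (ha : r ≤ (a : ℕ)) :
    (σe hri).symm a = Sum.inr ⟨a - r, by omega⟩ := by
  rw [Equiv.symm_apply_eq]
  apply Fin.ext
  simp only [σe_inr, Fin.val_mk]
  omega


lemma blockH (hri : r + i = d) (h : Matrix (Fin d) (Fin d) R)
    (hh : ∀ j k : Fin d, ((j : ℕ) < r ∨ r ≤ (k : ℕ)) → h j k = if j = k then 1 else 0) :
    φe hri R h = fromBlocks 1 0 ((φe hri R h).toBlocks₂₁) 1 := by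
  ext a b
  have inj := (σe hri).injective
  rcases a with j | j <;> rcases b with k | k
  · have := hh (σe hri (Sum.inl j)) (σe hri (Sum.inl k)) (Or.inl (by rw [σe_inl]; exact j.isLt))
    rw [φe_apply, this, fromBlocks_apply₁₁, one_apply]
    by_cases hjk : j = k
    · simp [hjk]
    · rw [if_neg hjk, if_neg (fun hc => hjk (Sum.inl.inj (inj hc)))]
  · have := hh (σe hri (Sum.inl j)) (σe hri (Sum.inr k)) (Or.inl (by rw [σe_inl]; exact j.isLt))
    rw [φe_apply, this, fromBlocks_apply₁₂]
    rw [if_neg]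
    · simp
    · intro hc
      have h1 := σe_inl hri j
      have h2 := σe_inr hri k
      rw [hc] at h1
      omega
  · rfl
  · have := hh (σe hri (Sum.inr j)) (σe hri (Sum.inr k)) (Or.inr (by rw [σe_inr]; omega))
    rw [φe_apply, this, fromBlocks_apply₂₂, one_apply]
    by_cases hjk : j = k
    · simp [hjk]
    · rw [if_neg hjk, if_neg (fun hc => hjk (Sum.inr.inj (inj hc)))]


lemma blockB (hri : r + i = d) (b : Matrix (Fin d) (Fin d) R)
    (hb : ∀ j k : Fin d, r ≤ (j : ℕ) → (k : ℕ) < r → b j k = 0) :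
    (φe hri R b).toBlocks₂₁ = 0 := by
  ext j k
  have := hb (σe hri (Sum.inr j)) (σe hri (Sum.inl k)) (by rw [σe_inr]; omega)
    (by rw [σe_inl]; exact k.isLt)
  simpa [toBlocks₂₁, φe_apply] using this

lemma blockB' (hri : r + i = d) (b : Matrix (Fin d) (Fin d) R)
    (hb : (φe hri R b).toBlocks₂₁ = 0) :
    ∀ j k : Fin d, r ≤ (j : ℕ) → (k : ℕ) < r → b j k = 0 := by
  intro j k hj hk
  rw [apply_φe hri b, σe_symm_ge hri hj, σe_symm_lt hri hk]
  have := congrFun (congrFun hb ⟨(j : ℕ) - r, by omega⟩) ⟨(k : ℕ), hk⟩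
  simpa [toBlocks₂₁] using this

lemma blockH' (hri : r + i = d) (h : Matrix (Fin d) (Fin d) R)
    (C : Matrix (Fin i) (Fin r) R) (hh : φe hri R h = fromBlocks 1 0 C 1) :
    ∀ j k : Fin d, ((j : ℕ) < r ∨ r ≤ (k : ℕ)) → h j k = if j = k then 1 else 0 := by
  intro j k hcond
  rw [apply_φe hri h, hh]
  rcases hcond with hj | hk
  · rw [σe_symm_lt hri hj]
    rcases lt_or_ge (k : ℕ) r with hk | hk
    · rw [σe_symm_lt hri hk, fromBlocks_apply₁₁, one_apply]
      by_cases hjk : j = k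
      · simp [hjk]
      · rw [if_neg, if_neg hjk]
        intro hc
        apply hjk
        apply Fin.ext
        have : ((⟨(j:ℕ), hj⟩ : Fin r) : ℕ) = ((⟨(k:ℕ), hk⟩ : Fin r) : ℕ) := by rw [hc]
        simpa using this
    · rw [σe_symm_ge hri hk, fromBlocks_apply₁₂]
      rw [if_neg]
      · simp
      · intro hc; omega
  · rcases lt_or_ge (j : ℕ) r with hj | hj
    · rw [σe_symm_lt hri hj, σe_symm_ge hri hk, fromBlocks_apply₁₂]
      rw [if_neg]
      · simp
      · intro hc; omega
    · rw [σe_symm_ge hri hj, σe_symm_ge hri hk, fromBlocks_apply₂₂, one_apply]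
      by_cases hjk : j = k
      · simp [hjk]
      · rw [if_neg, if_neg hjk]
        intro hc
        apply hjk
        apply Fin.ext
        have := congrArg Fin.val hc
        simp at this
        omega

lemma detA_isUnit (hri : r + i = d) (b : Matrix (Fin d) (Fin d) R) (hu : IsUnit b)
    (hb : (φe hri R b).toBlocks₂₁ = 0) :
    IsUnit ((φe hri R b).toBlocks₁₁).det := by
  have hub : IsUnit (φe hri R b) := hu.map (φe hri R)
  rw [isUnit_iff_isUnit_det] at hub
  have hdecomp : φe hri R b = fromBlocks (φe hri R b).toBlocks₁₁ (φe hri R b).toBlocks₁₂ 0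
      (φe hri R b).toBlocks₂₂ := by
    conv_lhs => rw [← fromBlocks_toBlocks (φe hri R b), hb]
  rw [hdecomp, det_fromBlocks_zero₂₁] at hub
  exact isUnit_of_mul_isUnit_left hub

end HBaux


section

variable (p : ℕ) [Fact p.Prime] (d i : ℕ)

/-- Membership in `H`: invertible block lower-unipotent matrices,
`g_{jk} = δ_{jk}` whenever `j ≤ d−i` or `k > d−i` (1-based); with 0-based `Fin d`
indices this reads `(j : ℕ) < d - i ∨ d - i ≤ (k : ℕ)`. -/
def memH (g : Matrix (Fin d) (Fin d) (PadicInt p)) : Prop :=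
  IsUnit g ∧ ∀ j k : Fin d, ((j : ℕ) < d - i ∨ d - i ≤ (k : ℕ)) →
    g j k = if j = k then 1 else 0

/-- Membership in `B`: invertible block upper-triangular matrices,
`g_{jk} = 0` whenever `j > d−i` and `k ≤ d−i` (1-based). -/
def memB (g : Matrix (Fin d) (Fin d) (PadicInt p)) : Prop :=
  IsUnit g ∧ ∀ j k : Fin d, d - i ≤ (j : ℕ) → (k : ℕ) < d - i → g j k = 0

open Matrix HBaux in
/-- Let `p` be prime, `1 ≤ i < d`. With `B ⊆ GL_d(ℤ_p)` the block
upper-triangular subgroup and `H` the block lower-unipotent subgroup, the multiplication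
map `H × B → GL_d(ℤ_p)` is injective and its image `HB` is open in `GL_d(ℤ_p)`
(topologized as a subspace of `M_d(ℤ_p)` with the `p`-adic topology). -/
theorem HB_injective_and_open (hi : 1 ≤ i) (hid : i < d) :
    (∀ h₁ h₂ b₁ b₂ : Matrix (Fin d) (Fin d) (PadicInt p),
      memH p d i h₁ → memH p d i h₂ → memB p d i b₁ → memB p d i b₂ →
      h₁ * b₁ = h₂ * b₂ → h₁ = h₂ ∧ b₁ = b₂) ∧
    IsOpen {x : {g : Matrix (Fin d) (Fin d) (PadicInt p) // IsUnit g} |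
      ∃ h b : Matrix (Fin d) (Fin d) (PadicInt p),
        memH p d i h ∧ memB p d i b ∧ (x : Matrix (Fin d) (Fin d) (PadicInt p)) = h * b} := by
  have hri : (d - i) + i = d := Nat.sub_add_cancel hid.le
  set φ := φe hri (PadicInt p) with hφ
  constructor
  · rintro h₁ h₂ b₁ b₂ ⟨hu1, hh1⟩ ⟨hu2, hh2⟩ ⟨bu1, hb1⟩ ⟨bu2, hb2⟩ heq
    have H1 := blockH hri h₁ hh1
    have H2 := blockH hri h₂ hh2
    have B1 := blockB hri b₁ hb1
    have B2 := blockB hri b₂ hb2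
    have db1 : φ b₁ = fromBlocks (φ b₁).toBlocks₁₁ (φ b₁).toBlocks₁₂ 0 (φ b₁).toBlocks₂₂ := by
      conv_lhs => rw [← fromBlocks_toBlocks (φ b₁), B1]
    have db2 : φ b₂ = fromBlocks (φ b₂).toBlocks₁₁ (φ b₂).toBlocks₁₂ 0 (φ b₂).toBlocks₂₂ := by
      conv_lhs => rw [← fromBlocks_toBlocks (φ b₂), B2]
    have e1 : φ h₁ * φ b₁ = fromBlocks (φ b₁).toBlocks₁₁ (φ b₁).toBlocks₁₂
        ((φ h₁).toBlocks₂₁ * (φ b₁).toBlocks₁₁)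
        ((φ h₁).toBlocks₂₁ * (φ b₁).toBlocks₁₂ + (φ b₁).toBlocks₂₂) := by
      rw [H1]; conv_lhs => rw [db1]
      rw [fromBlocks_multiply]; simp
    have e2 : φ h₂ * φ b₂ = fromBlocks (φ b₂).toBlocks₁₁ (φ b₂).toBlocks₁₂
        ((φ h₂).toBlocks₂₁ * (φ b₂).toBlocks₁₁)
        ((φ h₂).toBlocks₂₁ * (φ b₂).toBlocks₁₂ + (φ b₂).toBlocks₂₂) := by
      rw [H2]; conv_lhs => rw [db2]
      rw [fromBlocks_multiply]; simp
    have heq' : φ h₁ * φ b₁ = φ h₂ * φ b₂ := by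
      rw [← _root_.map_mul, ← _root_.map_mul, heq]
    rw [e1, e2] at heq'
    have hA : (φ b₁).toBlocks₁₁ = (φ b₂).toBlocks₁₁ := by
      have := congrArg toBlocks₁₁ heq'
      simpa [toBlocks_fromBlocks₁₁] using this
    have hCA : (φ h₁).toBlocks₂₁ * (φ b₁).toBlocks₁₁
        = (φ h₂).toBlocks₂₁ * (φ b₁).toBlocks₁₁ := by
      have := congrArg toBlocks₂₁ heq'
      simpa [toBlocks_fromBlocks₂₁, ← hA] using this
    have hA1 : IsUnit ((φ b₁).toBlocks₁₁).det := detA_isUnit hri b₁ bu1 B1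
    have hC : (φ h₁).toBlocks₂₁ = (φ h₂).toBlocks₂₁ := by
      calc (φ h₁).toBlocks₂₁
          = (φ h₁).toBlocks₂₁ * (φ b₁).toBlocks₁₁ * ((φ b₁).toBlocks₁₁)⁻¹ :=
            (mul_nonsing_inv_cancel_right _ _ hA1).symm
        _ = (φ h₂).toBlocks₂₁ * (φ b₁).toBlocks₁₁ * ((φ b₁).toBlocks₁₁)⁻¹ := by rw [hCA]
        _ = (φ h₂).toBlocks₂₁ := mul_nonsing_inv_cancel_right _ _ hA1
    have hhh : h₁ = h₂ := by
      apply (φe hri (PadicInt p)).injective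
      rw [← hφ, H1, H2, hC]
    refine ⟨hhh, hu2.mul_left_cancel ?_⟩
    rw [← hhh, heq, hhh]
  · have himg : {x : {g : Matrix (Fin d) (Fin d) (PadicInt p) // IsUnit g} |
        ∃ h b : Matrix (Fin d) (Fin d) (PadicInt p),
          memH p d i h ∧ memB p d i b ∧ (x : Matrix (Fin d) (Fin d) (PadicInt p)) = h * b}
        = {x : {g : Matrix (Fin d) (Fin d) (PadicInt p) // IsUnit g} |
            IsUnit ((φ x.val).toBlocks₁₁).det} := by
      ext x
      simp only [Set.mem_setOf_eq]
      constructor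
      · rintro ⟨h, b, ⟨hu, hh⟩, ⟨bu, hb⟩, hx⟩
        have Bb := blockB hri b hb
        have hA : IsUnit ((φ b).toBlocks₁₁).det := detA_isUnit hri b bu Bb
        have hblk : (φ x.val).toBlocks₁₁ = (φ b).toBlocks₁₁ := by
          have db : φ b = fromBlocks (φ b).toBlocks₁₁ (φ b).toBlocks₁₂ 0 (φ b).toBlocks₂₂ := by
            conv_lhs => rw [← fromBlocks_toBlocks (φ b), Bb]
          rw [hx, _root_.map_mul]
          rw [show φ h = _ from blockH hri h hh]
          conv_lhs => rw [db]
          rw [fromBlocks_multiply]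
          simp [toBlocks_fromBlocks₁₁]
        rw [hblk]; exact hA
      · intro hA
        set G := φ x.val with hG
        set C : Matrix (Fin i) (Fin (d - i)) (PadicInt p) := G.toBlocks₂₁ * (G.toBlocks₁₁)⁻¹
          with hCdef
        have hm1 : (fromBlocks 1 0 C 1 : Matrix (Fin (d-i) ⊕ Fin i) (Fin (d-i) ⊕ Fin i) (PadicInt p))
            * fromBlocks 1 0 (-C) 1 = 1 := by
          rw [fromBlocks_multiply]
          simp [← fromBlocks_one]
        have hm2 : (fromBlocks 1 0 (-C) 1 : Matrix (Fin (d-i) ⊕ Fin i) (Fin (d-i) ⊕ Fin i) (PadicInt p))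
            * fromBlocks 1 0 C 1 = 1 := by
          rw [fromBlocks_multiply]
          simp [← fromBlocks_one]
        set h := (φe hri (PadicInt p)).symm (fromBlocks 1 0 C 1) with hhdef
        set h' := (φe hri (PadicInt p)).symm (fromBlocks 1 0 (-C) 1) with hh'def
        have hφh : φ h = fromBlocks 1 0 C 1 := (φe hri (PadicInt p)).apply_symm_apply _
        have hφh' : φ h' = fromBlocks 1 0 (-C) 1 := (φe hri (PadicInt p)).apply_symm_apply _
        have huh : IsUnit h := by
          refine isUnit_iff_exists.mpr ⟨h', ?_, ?_⟩
          · apply (φe hri (PadicInt p)).injective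
            rw [← hφ, _root_.map_mul, _root_.map_one, hφh, hφh', hm1]
          · apply (φe hri (PadicInt p)).injective
            rw [← hφ, _root_.map_mul, _root_.map_one, hφh, hφh', hm2]
        have huh' : IsUnit h' := by
          refine isUnit_iff_exists.mpr ⟨h, ?_, ?_⟩
          · apply (φe hri (PadicInt p)).injective
            rw [← hφ, _root_.map_mul, _root_.map_one, hφh, hφh', hm2]
          · apply (φe hri (PadicInt p)).injective
            rw [← hφ, _root_.map_mul, _root_.map_one, hφh, hφh', hm1]
        refine ⟨h, h' * x.val, ⟨huh, blockH' hri h C hφh⟩, ⟨huh'.mul x.2, ?_⟩, ?_⟩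
        · apply blockB' hri
          rw [_root_.map_mul, hφh', ← hG]
          conv_lhs => rw [show G = fromBlocks G.toBlocks₁₁ G.toBlocks₁₂ G.toBlocks₂₁ G.toBlocks₂₂
            from (fromBlocks_toBlocks G).symm]
          rw [fromBlocks_multiply]
          simp only [toBlocks_fromBlocks₂₁, Matrix.one_mul, Matrix.zero_mul, neg_mul,
            Matrix.mul_zero, add_zero, zero_add]
          rw [hCdef, Matrix.neg_mul, nonsing_inv_mul_cancel_right _ _ hA]
          exact neg_add_cancel _
        · rw [← Matrix.mul_assoc]
          have : h * h' = 1 := by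
            apply (φe hri (PadicInt p)).injective
            rw [_root_.map_mul, _root_.map_one, hφh, hφh', hm1]
          rw [this, Matrix.one_mul]
    rw [himg]
    have hset : {x : {g : Matrix (Fin d) (Fin d) (PadicInt p) // IsUnit g} |
        IsUnit ((φ x.val).toBlocks₁₁).det}
        = (fun x : {g : Matrix (Fin d) (Fin d) (PadicInt p) // IsUnit g} =>
            ((φ x.val).toBlocks₁₁).det) ⁻¹' {y | IsUnit y} := rfl
    rw [hset]
    apply Units.isOpen.preimage
    apply Continuous.matrix_det
    apply continuous_matrix
    intro j k
    have : (fun x : {g : Matrix (Fin d) (Fin d) (PadicInt p) // IsUnit g} =>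
        (φ x.val).toBlocks₁₁ j k)
        = fun x => x.val (σe hri (Sum.inl j)) (σe hri (Sum.inl k)) := by
      funext x
      simp [toBlocks₁₁, hφ, φe_apply]
    rw [this]
    exact (continuous_apply _).comp ((continuous_apply _).comp continuous_subtype_val)


end
end

section
/- Let p be a prime and let d, i be integers with 1 ≤ i ≤ d. Let e_1, …, e_d be the standard basis of ℤ_p^d. For a subset W ⊆ {1, …, d} with d−i elements, put N_W = the ℤ_p-span of {e_w : w ∈ W} and H_W = {g ∈ GL_d(ℤ_p) : g_{jk} = δ_{jk} whenever j ∈ W or k ∉ W}. Then for every N ∈ Gr(i, ℤ_p^d) there exist a subset W ⊆ {1, …, d} with d−i elements and a matrix g ∈ H_W such that g(N_W) = N. -/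
/-!
Put `v_j` for the image of `e_j` in `Q = ℤ_p^d / N`. Since `ℤ_p` is local and `Q` is free,
the generating family `(v_j)` contains a basis `(v_s)_{s ∈ S}` with `|S| = i`, i.e. the
coordinate submodule `N_S` is a complement of `N`. Let `P` be the projection onto `N_S` along `N`
and `W = Sᶜ`. The matrix `g` sending `e_w ↦ e_w - P e_w` for `w ∈ W` and fixing `e_s` for `s ∈ S`
is unipotent (`P` vanishes on the `W`-coordinates) and lies in `H_W`; `g(N_W) ≤ N` and
`g(N_W) + N_S` is everything, so the modular law gives `g(N_W) = N`.
-/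

open Submodule

section Semiring

variable (R : Type*) {ι : Type*} [Semiring R] [DecidableEq ι]

def coordSpan (W : Finset ι) : Submodule R (ι → R) :=
  span R {v | ∃ w ∈ W, v = Pi.single w 1}

def chartMatrices [Fintype ι] (W : Finset ι) : Set (Matrix ι ι R) :=
  {g | IsUnit g ∧ ∀ j k, (j ∈ W ∨ k ∉ W) → g j k = if j = k then 1 else 0}

variable {R}

theorem single_mem_coordSpan {S : Finset ι} {s : ι} (hs : s ∈ S) :
    Pi.single s 1 ∈ coordSpan R S :=
  subset_span ⟨s, hs, rfl⟩

theorem apply_eq_zero_of_mem_coordSpan {S : Finset ι} {x : ι → R} (hx : x ∈ coordSpan R S)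
    {j : ι} (hj : j ∉ S) : x j = 0 := by
  induction hx using span_induction with
  | mem y hy =>
    obtain ⟨s, hs, rfl⟩ := hy
    exact Pi.single_eq_of_ne (by rintro rfl; exact hj hs) 1
  | zero => rfl
  | add x y _ _ hx hy => simp [hx, hy]
  | smul a x _ hx => simp [hx]

theorem eq_top_of_forall_single_mem [Fintype ι] {P : Submodule R (ι → R)}
    (h : ∀ k, Pi.single k 1 ∈ P) : P = ⊤ := by
  rw [eq_top_iff, ← (Pi.basisFun R ι).span_eq, span_le]
  rintro _ ⟨k, rfl⟩
  rw [Pi.basisFun_apply]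
  exact h k

end Semiring

theorem isCompl_span_of_basis_mkQ {R M κ : Type*} [Ring R] [AddCommGroup M] [Module R M]
    {N : Submodule R M} (u : κ → M) (b : Module.Basis κ R (M ⧸ N))
    (hb : ∀ k, b k = N.mkQ (u k)) : IsCompl (span R (Set.range u)) N := by
  have hbu : ⇑b = N.mkQ ∘ u := funext hb
  constructor
  · simpa using range_ker_disjoint (f := N.mkQ) (hbu ▸ b.linearIndependent)
  · rw [codisjoint_iff, sup_comm, ← map_mkQ_eq_top, map_span, ← Set.range_comp, ← hbu,
      b.span_eq]

section CommRing

variable {R ι : Type*} [CommRing R] [DecidableEq ι] [Fintype ι]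

theorem exists_isCompl_coordSpan [IsLocalRing R] (N : Submodule R (ι → R))
    [Module.Free R ((ι → R) ⧸ N)] :
    ∃ S : Finset ι, S.card = Module.finrank R ((ι → R) ⧸ N) ∧ IsCompl (coordSpan R S) N := by
  have := Module.finitePresentation_of_projective R ((ι → R) ⧸ N)
  have hspan : span R (Set.range fun j => N.mkQ (Pi.single j 1)) = ⊤ := by
    rw [Set.range_comp' N.mkQ, ← map_span,
      eq_top_of_forall_single_mem fun k => subset_span (Set.mem_range_self k),
      Submodule.map_top, range_mkQ]
  obtain ⟨κ, a, b, hb⟩ := Module.exists_basis_of_span_of_flat _ hspan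
  have ha : Function.Injective a := fun k l hkl => b.injective (by rw [hb, hb, hkl])
  have := Finite.of_injective a ha
  have := Fintype.ofFinite κ
  refine ⟨Finset.univ.image a, ?_, ?_⟩
  · rw [Finset.card_image_of_injective _ ha, Finset.card_univ, Module.finrank_eq_card_basis b]
  · have hS : coordSpan R (Finset.univ.image a) =
        span R (Set.range fun k => Pi.single (a k) 1) := by
      rw [coordSpan]
      congr 1
      ext v
      simp [eq_comm]
    rw [hS]
    exact isCompl_span_of_basis_mkQ _ b hb

/-- The matrix of `P ∘ π_W`, where `π_W` kills the coordinates outside `W`. -/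
def columnsOn (W : Finset ι) (P : (ι → R) →ₗ[R] ι → R) : Matrix ι ι R :=
  Matrix.of fun j k => if k ∈ W then P (Pi.single k 1) j else 0

theorem one_sub_columnsOn_mulVec_single {W : Finset ι} (P : (ι → R) →ₗ[R] ι → R) {w : ι}
    (hw : w ∈ W) :
    (1 - columnsOn W P).mulVec (Pi.single w 1) = Pi.single w 1 - P (Pi.single w 1) := by
  ext j
  simp [columnsOn, hw, Matrix.one_apply, Pi.single_apply, eq_comm]

theorem one_sub_columnsOn_mem_chartMatrices {W : Finset ι} {P : (ι → R) →ₗ[R] ι → R}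
    (hP : ∀ x, ∀ j ∈ W, P x j = 0) : 1 - columnsOn W P ∈ chartMatrices R W := by
  have hsq : columnsOn W P * columnsOn W P = 0 := by
    ext j k
    refine Finset.sum_eq_zero fun m _ => ?_
    by_cases hm : m ∈ W
    · simp [columnsOn, hm, hP]
    · simp [columnsOn, hm]
  refine ⟨IsNilpotent.isUnit_one_sub ⟨2, by rw [sq, hsq]⟩, fun j k hjk => ?_⟩
  rcases hjk with hj | hk
  · by_cases hk : k ∈ W <;> simp [columnsOn, hk, hP _ _ hj, Matrix.one_apply]
  · simp [columnsOn, hk, Matrix.one_apply]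

theorem exists_mem_chartMatrices_map_coordSpan_eq {W : Finset ι} {N : Submodule R (ι → R)}
    (h : IsCompl (coordSpan R Wᶜ) N) :
    ∃ g ∈ chartMatrices R W, (coordSpan R W).map g.mulVecLin = N := by
  set P := (coordSpan R Wᶜ).projection N h
  have hP : ∀ x, ∀ j ∈ W, P x j = 0 := fun x j hj =>
    apply_eq_zero_of_mem_coordSpan (projection_apply_mem h x) (Finset.notMem_compl.2 hj)
  set G := (coordSpan R W).map (1 - columnsOn W P).mulVecLin
  have hle : G ≤ N := by
    dsimp only [G, coordSpan]
    rw [map_span_le]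
    rintro _ ⟨w, hw, rfl⟩
    rw [Matrix.mulVecLin_apply, one_sub_columnsOn_mulVec_single P hw]
    exact sub_projection_mem h _
  have htop : G ⊔ coordSpan R Wᶜ = ⊤ := by
    refine eq_top_of_forall_single_mem fun k => ?_
    by_cases hk : k ∈ W
    · rw [← sub_add_cancel (Pi.single k 1 : ι → R) (P (Pi.single k 1)),
        ← one_sub_columnsOn_mulVec_single P hk]
      exact add_mem_sup (mem_map_of_mem (single_mem_coordSpan hk)) (projection_apply_mem h _)
    · exact mem_sup_right (single_mem_coordSpan (Finset.mem_compl.2 hk))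
  refine ⟨_, one_sub_columnsOn_mem_chartMatrices hP, ?_⟩
  calc G = G ⊔ coordSpan R Wᶜ ⊓ N := by rw [h.inf_eq_bot, sup_bot_eq]
    _ = (G ⊔ coordSpan R Wᶜ) ⊓ N := (sup_inf_assoc_of_le _ hle).symm
    _ = N := by rw [htop, top_inf_eq]

end CommRing

theorem grassmannian_covered_by_charts_general
    (p : ℕ) [Fact p.Prime] (d i : ℕ)
    (N : Submodule (PadicInt p) (Fin d → PadicInt p))
    (hNfree : Module.Free (PadicInt p) ((Fin d → PadicInt p) ⧸ N))
    (hNrank : Module.finrank (PadicInt p) ((Fin d → PadicInt p) ⧸ N) = i) :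
    ∃ W : Finset (Fin d), W.card = d - i ∧
      ∃ g : Matrix (Fin d) (Fin d) (PadicInt p), IsUnit g ∧
        (∀ j k : Fin d, (j ∈ W ∨ k ∉ W) → g j k = if j = k then 1 else 0) ∧
        Submodule.map (Matrix.mulVecLin g)
          (Submodule.span (PadicInt p)
            {v : Fin d → PadicInt p | ∃ w ∈ W, v = Pi.single w 1}) = N := by
  obtain ⟨S, hScard, hS⟩ := exists_isCompl_coordSpan N
  obtain ⟨g, ⟨hg, hchart⟩, hmap⟩ :=
    exists_mem_chartMatrices_map_coordSpan_eq (W := Sᶜ) (by rwa [compl_compl])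
  refine ⟨Sᶜ, ?_, g, hg, hchart, hmap⟩
  rw [Finset.card_compl, hScard, hNrank, Fintype.card_fin]

/-- Let `p` be prime and `1 ≤ i ≤ d`. For `W ⊆ {1, …, d}` with `d − i`
elements let `N_W` be the `ℤ_p`-span of the standard basis vectors `e_w`, `w ∈ W`, and let
`H_W = {g ∈ GL_d(ℤ_p) : g_{jk} = δ_{jk} whenever j ∈ W or k ∉ W}`. Then every
`N ∈ Gr(i, ℤ_p^d)` (i.e. every submodule `N` with `ℤ_p^d/N` free of rank `i`) is of the form
`g(N_W)` for some such `W` and some `g ∈ H_W`. -/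
theorem grassmannian_covered_by_charts
    (p : ℕ) [Fact p.Prime] (d i : ℕ) (hi : 1 ≤ i) (hid : i ≤ d)
    (N : Submodule (PadicInt p) (Fin d → PadicInt p))
    (hNfree : Module.Free (PadicInt p) ((Fin d → PadicInt p) ⧸ N))
    (hNrank : Module.finrank (PadicInt p) ((Fin d → PadicInt p) ⧸ N) = i) :
    ∃ W : Finset (Fin d), W.card = d - i ∧
      ∃ g : Matrix (Fin d) (Fin d) (PadicInt p), IsUnit g ∧
        (∀ j k : Fin d, (j ∈ W ∨ k ∉ W) → g j k = if j = k then 1 else 0) ∧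
        Submodule.map (Matrix.mulVecLin g)
          (Submodule.span (PadicInt p)
            {v : Fin d → PadicInt p | ∃ w ∈ W, v = Pi.single w 1}) = N :=
  grassmannian_covered_by_charts_general p d i N hNfree hNrank
end

section
/- Let Λ be a commutative regular local ring and let X be a finitely generated Λ-module with ht(Ann_Λ(X)) ≥ 2. Let Y_1, …, Y_r be Λ-submodules of X with Y_1 ∩ … ∩ Y_r = 0 such that for each j the radical P_j := √(Ann_Λ(X/Y_j)) is a prime ideal and the primes P_1, …, P_r are pairwise distinct. Let Z be the cokernel of the diagonal map X → ⊕_{j=1}^r X/Y_j, so that there is a short exact sequence 0 → X → ⊕_{j=1}^r X/Y_j → Z → 0. Then ht(Ann_Λ(Z)) ≥ 3. -/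
/-- The height of an ideal `I`: the infimum of the heights (in the poset of prime ideals)
of the prime ideals containing `I`, with the convention that the height of the unit ideal
(contained in no prime) is `∞ = ⊤`. -/
noncomputable def idealHeight (Λ : Type*) [CommRing Λ] (I : Ideal Λ) : ℕ∞ :=
  ⨅ P ∈ {P : PrimeSpectrum Λ | I ≤ P.asIdeal}, Order.height P

/-- A local ring is regular if it is noetherian and its maximal ideal can be generated by
Krull-dimension many elements. -/
def IsRegularLocal (Λ : Type*) [CommRing Λ] [IsLocalRing Λ] : Prop :=
  IsNoetherianRing Λ ∧
    ∃ s : Finset Λ, Ideal.span (s : Set Λ) = IsLocalRing.maximalIdeal Λ ∧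
      (s.card : WithBot (WithTop ℕ)) = ringKrullDim Λ

/-- Let `Λ` be a commutative regular local ring and `X` a finitely generated
`Λ`-module with `ht(Ann_Λ X) ≥ 2`. Let `Y_1, …, Y_r` be submodules of `X` with
`Y_1 ∩ ⋯ ∩ Y_r = 0` such that each `P_j := √(Ann_Λ(X/Y_j))` is prime and the `P_j` are
pairwise distinct. Let `Z` be the cokernel of the diagonal map `X → ⊕_j X/Y_j`.
Then `ht(Ann_Λ Z) ≥ 3`. -/
theorem height_annihilator_cokernel_ge_three
    (Λ : Type*) [CommRing Λ] [IsLocalRing Λ] (hreg : IsRegularLocal Λ)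
    (X : Type*) [AddCommGroup X] [Module Λ X] [Module.Finite Λ X]
    (hX : 2 ≤ idealHeight Λ (Module.annihilator Λ X))
    (r : ℕ) (Y : Fin r → Submodule Λ X)
    (hY : ⨅ j, Y j = ⊥)
    (hprime : ∀ j, (Ideal.radical (Module.annihilator Λ (X ⧸ Y j))).IsPrime)
    (hdistinct : Function.Injective fun j =>
      Ideal.radical (Module.annihilator Λ (X ⧸ Y j))) :
    3 ≤ idealHeight Λ (Module.annihilator Λ
      ((∀ j, X ⧸ Y j) ⧸ LinearMap.range (LinearMap.pi fun j => (Y j).mkQ))) := by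
  classical
  refine le_iInf₂ fun P hP => ?_
  set A : Fin r → Ideal Λ := fun j => Module.annihilator Λ (X ⧸ Y j) with hA
  -- each radical contains Ann X
  have hAnnle : ∀ j, Module.annihilator Λ X ≤ (A j).radical := fun j =>
    le_trans (LinearMap.annihilator_le_of_surjective (Y j).mkQ (Submodule.mkQ_surjective (Y j))
      : Module.annihilator Λ X ≤ A j) (Ideal.le_radical)
  by_cases hlt : ∃ j, (A j).radical < P.asIdeal
  · obtain ⟨j0, hj0⟩ := hlt
    set Q : PrimeSpectrum Λ := ⟨(A j0).radical, hprime j0⟩ with hQ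
    have h2 : 2 ≤ Order.height Q := by
      have := le_iInf₂_iff.mp hX Q (hAnnle j0)
      exact this
    have hQP : Q < P := hj0
    rcases eq_or_lt_of_le (le_top : Order.height Q ≤ ⊤) with htop | hfin
    · calc (3 : ℕ∞) ≤ ⊤ := le_top
        _ = Order.height Q := htop.symm
        _ ≤ Order.height P := Order.height_mono hQP.le
    · have := Order.height_strictMono hQP hfin
      have h2' : 2 < Order.height P := lt_of_le_of_lt h2 this
      exact Order.add_one_le_of_lt h2'
  · -- construct an element of Ann Z not in P, contradiction
    exfalso
    push_neg at hlt
    -- for j with ¬ (radical ≤ P), choose t_j ∈ A j \ P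
    have hchoice : ∀ j, ¬ (A j).radical ≤ P.asIdeal →
        ∃ t, t ∈ A j ∧ t ∉ P.asIdeal := by
      intro j hj
      obtain ⟨a, ha, haP⟩ := Set.not_subset.mp hj
      obtain ⟨n, hn⟩ := ha
      refine ⟨a ^ n, hn, fun h => haP ?_⟩
      exact P.isPrime.mem_of_pow_mem n h
    set c : Fin r → Λ := fun j =>
      if h : (A j).radical ≤ P.asIdeal then 1 else (hchoice j h).choose with hc
    have hcnotP : ∀ j, c j ∉ P.asIdeal := by
      intro j
      by_cases h : (A j).radical ≤ P.asIdeal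
      · simp only [hc, dif_pos h]
        exact fun h1 => P.isPrime.ne_top (Ideal.eq_top_of_isUnit_mem _ h1 isUnit_one)
      · simp only [hc, dif_neg h]
        exact (hchoice j h).choose_spec.2
    have hcA : ∀ j, ¬ (A j).radical ≤ P.asIdeal → c j ∈ A j := by
      intro j h
      simp only [hc, dif_neg h]
      exact (hchoice j h).choose_spec.1
    set t : Λ := ∏ j, c j with ht
    have htP : t ∉ P.asIdeal := by
      intro h
      obtain ⟨j, _, hj⟩ := (Ideal.IsPrime.prod_mem_iff (hp := P.isPrime)).mp h
      exact hcnotP j hj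
    -- t ∈ A j for any j with ¬ radical ≤ P
    have htA : ∀ j, ¬ (A j).radical ≤ P.asIdeal → t ∈ A j := by
      intro j h
      obtain ⟨k, hk⟩ := Finset.dvd_prod_of_mem c (Finset.mem_univ j)
      rw [ht, hk]
      exact Ideal.mul_mem_right _ _ (hcA j h)
    -- now show t ∈ Ann Z
    have htZ : t ∈ Module.annihilator Λ
        ((∀ j, X ⧸ Y j) ⧸ LinearMap.range (LinearMap.pi fun j => (Y j).mkQ)) := by
      rw [Module.mem_annihilator]
      intro z
      obtain ⟨w, rfl⟩ := Submodule.Quotient.mk_surjective _ z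
      rw [← Submodule.Quotient.mk_smul, Submodule.Quotient.mk_eq_zero]
      by_cases hex : ∃ j0, (A j0).radical ≤ P.asIdeal
      · obtain ⟨j0, hj0⟩ := hex
        -- uniqueness of j0: any other j has ¬ radical ≤ P
        have huniq : ∀ j, j ≠ j0 → ¬ (A j).radical ≤ P.asIdeal := by
          intro j hne hle
          have e1 : (A j).radical = P.asIdeal := hle.lt_or_eq.resolve_left (hlt j)
          have e2 : (A j0).radical = P.asIdeal := hj0.lt_or_eq.resolve_left (hlt j0)
          exact hne (hdistinct (e1.trans e2.symm))
        obtain ⟨x0, hx0⟩ := Submodule.Quotient.mk_surjective (Y j0) (w j0)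
        refine ⟨t • x0, ?_⟩
        funext j
        simp only [LinearMap.pi_apply, Pi.smul_apply]
        by_cases hje : j = j0
        · subst hje
          rw [Submodule.mkQ_apply, Submodule.Quotient.mk_smul, hx0]
        · have h1 : t • (w j) = 0 :=
            Module.mem_annihilator.mp (htA j (huniq j hje)) (w j)
          have h2 : t • Submodule.Quotient.mk (p := Y j) x0 = 0 :=
            Module.mem_annihilator.mp (htA j (huniq j hje)) _
          rw [Submodule.mkQ_apply, Submodule.Quotient.mk_smul, h2, h1]
      · push_neg at hex
        have : t • w = 0 := by
          funext j
          exact Module.mem_annihilator.mp (htA j (hex j)) (w j)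
        rw [this]
        exact Submodule.zero_mem _
    exact htP (hP htZ)
end

section
/- Let p be a prime, let d ≥ 1 be an integer, and let f ∈ ℤ_p[T_1, …, T_d] be a nonzero polynomial. Then the zero set {α ∈ ℤ_p^d : f(α) = 0} is a closed subset of ℤ_p^d of Haar measure zero. -/
/-!
Slicing off the first coordinate, Fubini reduces the claim in dimension `n + 1` to dimension `n`:
viewed as a polynomial in the first variable, `f` has a nonzero leading coefficient `c`, a
polynomial in the remaining `n` variables. By induction `c` vanishes only on a null set, and
wherever it does not vanish the slice of the zero set of `f` is the finite root set of a nonzero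
one-variable polynomial, which is null because a Haar measure on `ℤ_p` has no atoms (`0` is not
isolated, as `p ^ k → 0`). Any Haar measure on `ℤ_p^d` is absolutely continuous with respect to
the product of Haar measures on `ℤ_p`.
-/

open MeasureTheory Filter Topology

theorem nhdsNE_zero_neBot_of_norm_lt_one {R : Type*} [NormedRing R] [NoZeroDivisors R] {x : R}
    (hx₀ : x ≠ 0) (hx₁ : ‖x‖ < 1) : (𝓝[≠] (0 : R)).NeBot :=
  mem_closure_iff_nhdsWithin_neBot.mp <|
    mem_closure_of_tendsto (tendsto_pow_atTop_nhds_zero_of_norm_lt_one hx₁)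
      (Eventually.of_forall fun n => pow_ne_zero n hx₀)

instance PadicInt.nhdsNE_zero_neBot (p : ℕ) [Fact p.Prime] : (𝓝[≠] (0 : ℤ_[p])).NeBot :=
  nhdsNE_zero_neBot_of_norm_lt_one (Nat.cast_ne_zero.mpr (Fact.out : p.Prime).ne_zero)
    (by simpa [PadicInt.norm_p] using inv_lt_one_of_one_lt₀ (Nat.one_lt_cast.mpr
      (Fact.out : p.Prime).one_lt))

theorem MeasureTheory.Measure.pi_fin_succ_eq_zero_of_ae_slice {α : Type*} [MeasurableSpace α]
    (ν : Measure α) [SigmaFinite ν] {n : ℕ} {S : Set (Fin (n + 1) → α)} (hS : MeasurableSet S)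
    (h : ∀ᵐ s ∂(Measure.pi fun _ : Fin n => ν), ν {y | Fin.cons y s ∈ S} = 0) :
    Measure.pi (fun _ => ν) S = 0 := by
  set e := MeasurableEquiv.piFinSuccAbove (fun _ : Fin (n + 1) => α) 0
  have hpi : MeasurePreserving e.symm (ν.prod (Measure.pi fun _ : Fin n => ν)) _ :=
    (measurePreserving_piFinSuccAbove (fun _ : Fin (n + 1) => ν) 0).symm e
  have hswap := Measure.measurePreserving_swap (μ := Measure.pi fun _ : Fin n => ν) (ν := ν)
  have hT : MeasurableSet (e.symm ⁻¹' S) := hS.preimage e.symm.measurable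
  rw [← hpi.measure_preimage hS.nullMeasurableSet,
    ← hswap.measure_preimage hT.nullMeasurableSet,
    Measure.measure_prod_null (hT.preimage measurable_swap)]
  filter_upwards [h] with s hs
  simp only [e, MeasurableEquiv.piFinSuccAbove_symm_apply, Fin.insertNthEquiv_zero, Pi.zero_apply]
  exact hs

namespace MvPolynomial

variable {R : Type*} [CommRing R] [TopologicalSpace R] [IsTopologicalRing R] [T1Space R]

theorem isClosed_setOf_eval_eq_zero {σ : Type*} (f : MvPolynomial σ R) :
    IsClosed {α : σ → R | eval α f = 0} :=
  isClosed_singleton.preimage (continuous_eval f)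

variable [IsDomain R] [SecondCountableTopology R] [MeasurableSpace R] [BorelSpace R]

theorem measure_pi_setOf_eval_eq_zero (ν : Measure R) [SigmaFinite ν] [NullSingletonClass ν] :
    ∀ {n : ℕ} {f : MvPolynomial (Fin n) R}, f ≠ 0 →
      Measure.pi (fun _ => ν) {α | eval α f = 0} = 0
  | 0, f, hf => by
    obtain ⟨r, rfl⟩ := C_surjective (Fin 0) f
    simp [(C_ne_zero).mp hf]
  | n + 1, f, hf => by
    set F := finSuccEquiv R n f
    have hc : F.leadingCoeff ≠ 0 := by simpa [F] using hf
    refine Measure.pi_fin_succ_eq_zero_of_ae_slice ν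
      (isClosed_setOf_eval_eq_zero f).measurableSet ?_
    filter_upwards [measure_eq_zero_iff_ae_notMem.mp (measure_pi_setOf_eval_eq_zero ν hc)]
      with s hs
    have hFs : F.map (eval s) ≠ 0 := fun h => hs <| by
      simpa using congrArg (Polynomial.coeff · F.natDegree) h
    simp only [eval_eq_eval_mv_eval']
    exact (Polynomial.finite_setOfPred_isRoot hFs).measure_zero ν

end MvPolynomial

theorem zero_set_of_polynomial_closed_and_null_general
    (p : ℕ) [Fact p.Prime] (d : ℕ)
    (f : MvPolynomial (Fin d) (PadicInt p)) (hf : f ≠ 0)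
    [MeasurableSpace (Fin d → PadicInt p)] [BorelSpace (Fin d → PadicInt p)]
    (μ : Measure (Fin d → PadicInt p)) [μ.IsAddHaarMeasure] :
    IsClosed {α : Fin d → PadicInt p | MvPolynomial.eval α f = 0} ∧
      μ {α : Fin d → PadicInt p | MvPolynomial.eval α f = 0} = 0 := by
  refine ⟨MvPolynomial.isClosed_setOf_eval_eq_zero f, ?_⟩
  let : MeasurableSpace ℤ_[p] := borel _
  have : BorelSpace ℤ_[p] := ⟨rfl⟩
  obtain rfl : ‹MeasurableSpace (Fin d → ℤ_[p])› = MeasurableSpace.pi :=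
    ‹BorelSpace (Fin d → ℤ_[p])›.measurable_eq.trans Pi.borelSpace.measurable_eq.symm
  have hν : Measure.pi (fun _ => Measure.addHaar) {α | MvPolynomial.eval α f = 0} = 0 :=
    MvPolynomial.measure_pi_setOf_eval_eq_zero Measure.addHaar hf
  exact Measure.absolutelyContinuous_isAddHaarMeasure μ _ hν

/-- Let `p` be a prime, `d ≥ 1` and `f ∈ ℤ_p[T_1, …, T_d]` a nonzero
polynomial. Then the zero set `{α ∈ ℤ_p^d : f(α) = 0}` is closed and has Haar measure
zero (for any (additive) Haar measure on `ℤ_p^d`, in particular for the normalized one). -/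
theorem zero_set_of_polynomial_closed_and_null
    (p : ℕ) [Fact p.Prime] (d : ℕ) (hd : 1 ≤ d)
    (f : MvPolynomial (Fin d) (PadicInt p)) (hf : f ≠ 0)
    [MeasurableSpace (Fin d → PadicInt p)] [BorelSpace (Fin d → PadicInt p)]
    (μ : Measure (Fin d → PadicInt p)) [μ.IsAddHaarMeasure] :
    IsClosed {α : Fin d → PadicInt p | MvPolynomial.eval α f = 0} ∧
      μ {α : Fin d → PadicInt p | MvPolynomial.eval α f = 0} = 0 :=
  zero_set_of_polynomial_closed_and_null_general p d f hf μ
end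

section
/- Let p be a prime, let Λ = ℤ_p⟦T⟧ be the formal power series ring in one variable over ℤ_p, let n ≥ 0 and s ≥ 0 be integers, and put ν = Σ_{k=0}^{p−1} (1+T)^{k·pⁿ} ∈ Λ. Let Y be a finitely generated Λ-module and let f : Y → ℤ_p^s be a surjective Λ-module homomorphism, where Λ acts on ℤ_p^s through the augmentation T ↦ 0 (so that ν acts on ℤ_p^s as multiplication by p). If the quotient Y/νY is finite of cardinality p^s, then the kernel of f is zero; in particular, Y is isomorphic to ℤ_p^s as a Λ-module. -/
/-!
Since `ν` has constant coefficient `p`, reduction mod `p` induces a surjection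
`Y/νY → (ℤ/p)^s`; equality of cardinalities makes it a bijection, so `ker f ⊆ νY`.
If `ν • y ∈ ker f` then `p • f y = 0`, hence `f y = 0` as `ℤ_p^s` is torsion free; thus
`ker f ⊆ ν • ker f`. As `Λ` is noetherian, `ker f` is finitely generated, and Nakayama's lemma
(`ν` lies in the maximal ideal of the local ring `Λ`) gives `ker f = 0`.
-/

open PowerSeries Pointwise

theorem AddSubgroup.ker_le_of_le_ker_of_index_eq {G Q : Type*} [AddGroup G] [AddGroup Q]
    {g : G →+ Q} (hg : Function.Surjective g) {H : AddSubgroup G} (hH : H ≤ g.ker)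
    (hindex : H.index = Nat.card Q) (hQ : Nat.card Q ≠ 0) : g.ker ≤ H := by
  have h := AddSubgroup.relIndex_mul_index hH
  rw [AddSubgroup.index_ker, AddMonoidHom.range_eq_top_of_surjective g hg,
    AddSubgroup.card_top, hindex] at h
  exact AddSubgroup.relIndex_eq_one.mp (by simpa [hQ] using h)

theorem LinearMap.ker_le_smul_ker {Λ R Y M : Type*} [CommRing Λ] [Semiring R] [AddCommGroup Y]
    [Module Λ Y] [AddCommMonoid M] [Module R M] {σ : Λ →+* R} (f : Y →ₛₗ[σ] M) {ν : Λ}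
    (hν : IsSMulRegular M (σ ν)) (h : ker f ≤ ν • ⊤) : ker f ≤ ν • ker f := by
  intro k hk
  obtain ⟨y, -, rfl⟩ := (Submodule.mem_smul_pointwise_iff_exists _ _ _).mp (h hk)
  refine Submodule.smul_mem_pointwise_smul y ν _ (hν ?_)
  rw [mem_ker, map_smulₛₗ] at hk
  simpa using hk

theorem Submodule.eq_bot_of_le_smul_of_mem_maximalIdeal {Λ Y : Type*} [CommRing Λ]
    [IsLocalRing Λ] [AddCommGroup Y] [Module Λ Y] {K : Submodule Λ Y} (hK : K.FG) {ν : Λ}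
    (hν : ν ∈ IsLocalRing.maximalIdeal Λ) (h : K ≤ ν • K) : K = ⊥ := by
  refine eq_bot_of_le_smul_of_le_jacobson_bot (Ideal.span {ν}) K hK
    (by rwa [ideal_span_singleton_smul]) ?_
  rwa [IsLocalRing.jacobson_eq_maximalIdeal ⊥ bot_ne_top, Ideal.span_singleton_le_iff_mem]

theorem PadicInt.ker_le_smul_top_of_card_quotient_eq {p : ℕ} [Fact p.Prime] {Λ Y : Type*}
    [CommRing Λ] [AddCommGroup Y] [Module Λ Y] {s : ℕ} {σ : Λ →+* ℤ_[p]}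
    (f : Y →ₛₗ[σ] (Fin s → ℤ_[p])) (hf : Function.Surjective f) {ν : Λ} (hν : σ ν = p)
    (hcard : Nat.card (Y ⧸ ν • (⊤ : Submodule Λ Y)) = p ^ s) :
    LinearMap.ker f ≤ ν • ⊤ := by
  let g : Y →+ (Fin s → ZMod p) :=
    (toZMod.toAddMonoidHom.compLeft (Fin s)).comp f.toAddMonoidHom
  have hg : Function.Surjective g := (ZMod.ringHom_surjective toZMod).comp_left.comp hf
  have hle : (ν • ⊤ : Submodule Λ Y).toAddSubgroup ≤ g.ker := by
    intro x hx
    obtain ⟨y, -, rfl⟩ := (Submodule.mem_smul_pointwise_iff_exists _ _ _).mp hx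
    ext i
    simp [g, hν]
  have hQ : Nat.card (Fin s → ZMod p) = p ^ s := by simp
  intro k hk
  refine AddSubgroup.ker_le_of_le_ker_of_index_eq hg hle (hcard.trans hQ.symm)
    (by simp [NeZero.ne]) ?_
  simp [g, LinearMap.mem_ker.mp hk]

theorem ker_eq_bot_of_card_quotient_eq_general
    (p : ℕ) [Fact p.Prime] (n s : ℕ)
    (Y : Type*) [AddCommGroup Y] [Module (PowerSeries (PadicInt p)) Y]
    [Module.Finite (PowerSeries (PadicInt p)) Y]
    (f : Y →ₛₗ[(PowerSeries.constantCoeff (R := PadicInt p))] (Fin s → PadicInt p))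
    (hsurj : Function.Surjective f)
    (hcard : Nat.card (Y ⧸ (Ideal.span
      {∑ k ∈ Finset.range p, ((1 : PowerSeries (PadicInt p)) + PowerSeries.X) ^ (k * p ^ n)} •
        (⊤ : Submodule (PowerSeries (PadicInt p)) Y))) = p ^ s) :
    LinearMap.ker f = ⊥ ∧ Function.Bijective f := by
  set ν := ∑ k ∈ Finset.range p, ((1 : PowerSeries (PadicInt p)) + PowerSeries.X) ^ (k * p ^ n)
  have hν : constantCoeff ν = p := by simp [ν]
  have hν_mem : ν ∈ IsLocalRing.maximalIdeal _ := by
    rw [IsLocalRing.mem_maximalIdeal, mem_nonunits_iff, isUnit_iff_constantCoeff, hν]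
    exact PadicInt.p_nonunit
  rw [Submodule.ideal_span_singleton_smul] at hcard
  have hker : LinearMap.ker f ≤ ν • LinearMap.ker f :=
    f.ker_le_smul_ker (by rw [hν]; exact .of_ne_zero (NeZero.ne _))
      (PadicInt.ker_le_smul_top_of_card_quotient_eq f hsurj hν hcard)
  have hker_eq := Submodule.eq_bot_of_le_smul_of_mem_maximalIdeal
    (IsNoetherian.noetherian _) hν_mem hker
  exact ⟨hker_eq, LinearMap.ker_eq_bot.mp hker_eq, hsurj⟩

/-- Let `p` be prime, `Λ = ℤ_p⟦T⟧`, `n, s ≥ 0`, and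
`ν = Σ_{k=0}^{p−1} (1+T)^{k·pⁿ} ∈ Λ`. Let `Y` be a finitely generated `Λ`-module and
`f : Y → ℤ_p^s` a surjective `Λ`-module homomorphism, where `Λ` acts on `ℤ_p^s` through the
augmentation `T ↦ 0` (formalized: `f` is semilinear along the constant-coefficient map
`Λ →+* ℤ_p`). If `Y/νY` is finite of cardinality `p^s`, then `ker f = 0`; in particular
`f : Y → ℤ_p^s` is an isomorphism. -/
theorem ker_eq_bot_of_card_quotient_eq
    (p : ℕ) [Fact p.Prime] (n s : ℕ)
    (Y : Type*) [AddCommGroup Y] [Module (PowerSeries (PadicInt p)) Y]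
    [Module.Finite (PowerSeries (PadicInt p)) Y]
    (f : Y →ₛₗ[(PowerSeries.constantCoeff (R := PadicInt p))] (Fin s → PadicInt p))
    (hsurj : Function.Surjective f)
    (hfin : Finite (Y ⧸ (Ideal.span
      {∑ k ∈ Finset.range p, ((1 : PowerSeries (PadicInt p)) + PowerSeries.X) ^ (k * p ^ n)} •
        (⊤ : Submodule (PowerSeries (PadicInt p)) Y))))
    (hcard : Nat.card (Y ⧸ (Ideal.span
      {∑ k ∈ Finset.range p, ((1 : PowerSeries (PadicInt p)) + PowerSeries.X) ^ (k * p ^ n)} •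
        (⊤ : Submodule (PowerSeries (PadicInt p)) Y))) = p ^ s) :
    LinearMap.ker f = ⊥ ∧ Function.Bijective f :=
  ker_eq_bot_of_card_quotient_eq_general p n s Y f hsurj hcard
end
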